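/- arXiv:1506.06207 — 8 statements merged into one kernel-verified Lean document; each statement's English description precedes it below -/
import Mathlib

section
/- Let X be a complete metric space. If a parameterized iterated function system F = {X; f_λ | λ ∈ Λ} is uniformly contracting, then F has the weak shadowing property on ℤ₊. -/
/-- Orbit of the IFS `f` on `ℤ₊`. -/
def IsOrbitNat {X Λ : Type*} (f : Λ → X → X) (y : ℕ → X) : Prop :=
  ∃ σ : ℕ → Λ, ∀ n : ℕ, y (n + 1) = f (σ n) (y n)

/-- `δ`-pseudo orbit of the IFS `f` on `ℤ₊`. -/
def IsPseudoOrbitNat {X Λ : Type*} [MetricSpace X] (f : Λ → X → X) (δ : ℝ)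
    (x : ℕ → X) : Prop :=
  ∃ σ : ℕ → Λ, ∀ n : ℕ, dist (x (n + 1)) (f (σ n) (x n)) < δ

/-- Weak shadowing property on `ℤ₊`. -/
def WeakShadowingNat {X Λ : Type*} [MetricSpace X] (f : Λ → X → X) : Prop :=
  ∀ ε > (0 : ℝ), ∃ δ > (0 : ℝ), ∀ x : ℕ → X, IsPseudoOrbitNat f δ x →
    ∃ y : ℕ → X, IsOrbitNat f y ∧ ∀ n : ℕ, ∃ m : ℕ, dist (y n) (x m) < ε

/-- The IFS `f` is uniformly contracting: the supremum `β` of the Lipschitz ratios of the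
maps `f lam` is less than one. -/
def UniformlyContracting {X Λ : Type*} [MetricSpace X] (f : Λ → X → X) : Prop :=
  ∃ β : ℝ, β < 1 ∧ ∀ (lam : Λ) (x y : X), dist (f lam x) (f lam y) ≤ β * dist x y

/-- A uniformly contracting IFS on a complete metric space has the weak shadowing
property on `ℤ₊`. -/
theorem weakShadowing_of_uniformlyContracting
    {X Λ : Type*} [MetricSpace X] [CompleteSpace X] [Finite Λ] [Nonempty Λ]
    (f : Λ → X → X) (hf : ∀ lam : Λ, Continuous (f lam))
    (hc : UniformlyContracting f) :
    WeakShadowingNat f := by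
  obtain ⟨β, hβ1, hβ⟩ := hc
  set β' : ℝ := max β 0 with hβ'def
  have hβ'1 : β' < 1 := max_lt hβ1 one_pos
  have hβ'0 : 0 ≤ β' := le_max_right _ _
  have hβ' : ∀ (lam : Λ) (a b : X), dist (f lam a) (f lam b) ≤ β' * dist a b := by
    intro lam a b
    exact (hβ lam a b).trans (mul_le_mul_of_nonneg_right (le_max_left _ _) dist_nonneg)
  intro ε hε
  refine ⟨ε * (1 - β'), mul_pos hε (by linarith), ?_⟩
  rintro x ⟨σ, hσ⟩
  set y : ℕ → X := fun n => Nat.rec (x 0) (fun n yn => f (σ n) yn) n with hy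
  have hclose : ∀ n : ℕ, dist (y n) (x n) < ε := by
    intro n
    induction n with
    | zero => rw [show y 0 = x 0 from rfl, dist_self]; exact hε
    | succ n ih =>
      have h1 : dist (y (n + 1)) (x (n + 1)) ≤
          dist (f (σ n) (y n)) (f (σ n) (x n)) + dist (x (n + 1)) (f (σ n) (x n)) := by
        rw [show y (n + 1) = f (σ n) (y n) from rfl, dist_comm (x (n+1))]
        exact dist_triangle _ _ _
      have h2 := hβ' (σ n) (y n) (x n)
      have h3 := hσ n
      have h4 : β' * dist (y n) (x n) ≤ β' * ε :=
        mul_le_mul_of_nonneg_left ih.le hβ'0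
      nlinarith
  exact ⟨y, ⟨σ, fun n => rfl⟩, fun n => ⟨n, hclose n⟩⟩
end

section
/- Let X be a complete metric space. If a parameterized iterated function system F = {X; f_λ | λ ∈ Λ} is uniformly expanding and each map f_λ (λ ∈ Λ) is surjective, then F has the weak shadowing property on ℤ₊. -/
/-- The IFS `f` is uniformly expanding: the infimum `α` of the expansion ratios of the
maps `f lam` is greater than one. -/
def UniformlyExpanding {X Λ : Type*} [MetricSpace X] (f : Λ → X → X) : Prop :=
  ∃ α : ℝ, 1 < α ∧ ∀ (lam : Λ) (x y : X), α * dist x y ≤ dist (f lam x) (f lam y)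

/-- Iterated backward images: `backSeq g σ x k n = g (σ n) (... (g (σ (n+k-1)) (x (n+k))))`. -/
def backSeq {X Λ : Type*} (g : Λ → X → X) (σ : ℕ → Λ) (x : ℕ → X) : ℕ → ℕ → X
  | 0 => x
  | (k + 1) => fun n => g (σ n) (backSeq g σ x k (n + 1))

/-- A uniformly expanding IFS with surjective maps on a complete metric space has the
weak shadowing property on `ℤ₊`. -/
theorem weakShadowing_of_uniformlyExpanding
    {X Λ : Type*} [MetricSpace X] [CompleteSpace X] [Finite Λ] [Nonempty Λ]
    (f : Λ → X → X) (hf : ∀ lam : Λ, Continuous (f lam))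
    (hc : UniformlyExpanding f) (hsurj : ∀ lam : Λ, Function.Surjective (f lam)) :
    WeakShadowingNat f := by
  obtain ⟨α, hα, hexp⟩ := hc
  have hα0 : (0 : ℝ) < α := lt_trans one_pos hα
  -- inverse maps
  set g : Λ → X → X := fun lam => Function.surjInv (hsurj lam) with hg
  have hfg : ∀ lam x, f lam (g lam x) = x := fun lam x => Function.surjInv_eq (hsurj lam) x
  have hinj : ∀ lam : Λ, Function.Injective (f lam) := by
    intro lam a b hab
    have := hexp lam a b
    rw [hab, dist_self] at this
    have : dist a b ≤ 0 := by nlinarith [dist_nonneg (x := a) (y := b)]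
    exact dist_le_zero.mp this
  have hgf : ∀ lam x, g lam (f lam x) = x := by
    intro lam x
    exact hinj lam (hfg lam (f lam x))
  have hglip : ∀ lam (a b : X), dist (g lam a) (g lam b) ≤ α⁻¹ * dist a b := by
    intro lam a b
    have h := hexp lam (g lam a) (g lam b)
    rw [hfg, hfg] at h
    rw [← le_div_iff₀' hα0] at h
    simpa [div_eq_inv_mul] using h
  intro ε hε
  refine ⟨ε * (α - 1) / 2, by nlinarith, ?_⟩
  rintro x ⟨σ, hps⟩
  set δ : ℝ := ε * (α - 1) / 2 with hδdef
  have hδ0 : 0 < δ := by rw [hδdef]; nlinarith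
  set w : ℕ → ℕ → X := backSeq g σ x with hw
  have hw0 : ∀ n, w 0 n = x n := fun n => rfl
  have hwsucc : ∀ k n, w (k + 1) n = g (σ n) (w k (n + 1)) := fun k n => rfl
  -- geometric bound
  have hstep : ∀ k n, dist (w k n) (w (k + 1) n) ≤ (δ * α⁻¹) * α⁻¹ ^ k := by
    intro k
    induction k with
    | zero =>
      intro n
      have : dist (x n) (g (σ n) (x (n + 1))) ≤ α⁻¹ * dist (f (σ n) (x n)) (x (n + 1)) := by
        have := hglip (σ n) (f (σ n) (x n)) (x (n + 1))
        rwa [hgf] at this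
      have h2 : dist (f (σ n) (x n)) (x (n + 1)) < δ := by
        rw [dist_comm]; exact hps n
      simp only [hw0, hwsucc, pow_zero, mul_one]
      calc dist (x n) (g (σ n) (x (n + 1))) ≤ α⁻¹ * dist (f (σ n) (x n)) (x (n + 1)) := this
        _ ≤ α⁻¹ * δ := by
            apply mul_le_mul_of_nonneg_left h2.le (by positivity)
        _ = δ * α⁻¹ := mul_comm _ _
    | succ k ih =>
      intro n
      calc dist (w (k + 1) n) (w (k + 2) n)
          = dist (g (σ n) (w k (n + 1))) (g (σ n) (w (k + 1) (n + 1))) := rfl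
        _ ≤ α⁻¹ * dist (w k (n + 1)) (w (k + 1) (n + 1)) := hglip _ _ _
        _ ≤ α⁻¹ * ((δ * α⁻¹) * α⁻¹ ^ k) := by
            apply mul_le_mul_of_nonneg_left (ih (n + 1)) (by positivity)
        _ = (δ * α⁻¹) * α⁻¹ ^ (k + 1) := by ring
  have hr1 : α⁻¹ < 1 := inv_lt_one_of_one_lt₀ hα
  -- Cauchy, limits
  have hcauchy : ∀ n, CauchySeq (fun k => w k n) := by
    intro n
    exact cauchySeq_of_le_geometric α⁻¹ (δ * α⁻¹) hr1 (fun k => hstep k n)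
  choose y hy using fun n => cauchySeq_tendsto_of_complete (hcauchy n)
  refine ⟨y, ⟨σ, ?_⟩, ?_⟩
  · intro n
    have h1 : Filter.Tendsto (fun k => f (σ n) (w (k + 1) n)) Filter.atTop (nhds (f (σ n) (y n))) :=
      ((hf (σ n)).continuousAt.tendsto.comp ((hy n).comp (Filter.tendsto_add_atTop_nat 1)))
    have h2 : (fun k => f (σ n) (w (k + 1) n)) = fun k => w k (n + 1) := by
      funext k
      rw [hwsucc, hfg]
    rw [h2] at h1
    exact tendsto_nhds_unique (hy (n + 1)) h1
  · intro n
    refine ⟨n, ?_⟩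
    have := dist_le_of_le_geometric_of_tendsto₀ α⁻¹ (δ * α⁻¹) hr1 (fun k => hstep k n) (hy n)
    rw [hw0] at this
    rw [dist_comm]
    have hcomp : δ * α⁻¹ / (1 - α⁻¹) = δ / (α - 1) := by
      rw [div_eq_div_iff (by linarith) (by linarith)]
      field_simp
    rw [hcomp] at this
    have hδε : δ / (α - 1) < ε := by
      rw [div_lt_iff₀ (by linarith)]; rw [hδdef]; nlinarith
    linarith
end

section
/- Let S¹ = ℝ/ℤ be the unit circle with its standard metric, let β₁ ∈ (0,1) be irrational, let β₂ = β₁ + 1/2 (mod 1), and let f_i : S¹ → S¹ be the rotations f_i(x) = x + β_i (mod 1) for i = 1, 2. Then the parameterized iterated function system F = {S¹; f₁, f₂} does not have the shadowing property on ℤ₊. -/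
/-- Shadowing property on `ℤ₊`. -/
def ShadowingNat {X Λ : Type*} [MetricSpace X] (f : Λ → X → X) : Prop :=
  ∀ ε > (0 : ℝ), ∃ δ > (0 : ℝ), ∀ x : ℕ → X, IsPseudoOrbitNat f δ x →
    ∃ y : ℕ → X, IsOrbitNat f y ∧ ∀ n : ℕ, dist (x n) (y n) ≤ ε

/-!
Every composition of the two rotations moves a point by `n β₁` plus a multiple of `1/2`, so an
orbit `y` satisfies `y n - y 0 - n β₁ ∈ {0, 1/2}`. The pseudo orbit `x n = n (β₁ + 1/(4N))`, which
uses only `f₁` with an error `1/(4N)`, drifts by `1/4` in `N` steps, and `1/4` is at distance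
`1/4` from `{0, 1/2}`: no orbit starting `1/12`-close to `x 0` can stay `1/12`-close to `x`.
-/

open AddSubgroup

section Translations

variable {G Λ : Type*}

theorem IsOrbitNat.sub_sub_nsmul_mem [AddCommGroup G] {b : Λ → G} {H : AddSubgroup G}
    {i₀ : Λ} (hb : ∀ i, b i - b i₀ ∈ H) {y : ℕ → G} (hy : IsOrbitNat (fun i x => x + b i) y)
    (n : ℕ) :
    y n - y 0 - n • b i₀ ∈ H := by
  obtain ⟨σ, hσ⟩ := hy
  induction n with
  | zero => simp
  | succ n ih =>
    have hstep :
        y (n + 1) - y 0 - (n + 1) • b i₀ = (y n - y 0 - n • b i₀) + (b (σ n) - b i₀) := by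
      simp only [hσ n, succ_nsmul]; abel
    rw [hstep]
    exact H.add_mem ih (hb _)

theorem isPseudoOrbitNat_nsmul_add [NormedAddCommGroup G] (b : Λ → G) (i : Λ) {c : G}
    {δ : ℝ} (hc : ‖c‖ < δ) : IsPseudoOrbitNat (fun i x => x + b i) δ (fun n => n • (b i + c)) := by
  refine ⟨fun _ => i, fun n => ?_⟩
  have hstep : (n + 1) • (b i + c) - (n • (b i + c) + b i) = c := by
    rw [succ_nsmul]; abel
  simpa only [dist_eq_norm, hstep] using hc

theorem not_shadowingNat_translations [NormedAddCommGroup G] (b : Λ → G) (H : AddSubgroup G)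
    (i₀ : Λ) (hb : ∀ i, b i - b i₀ ∈ H) {q : G} {r : ℝ} (hr : 0 < r)
    (hq : ∀ h ∈ H, r ≤ ‖q - h‖) (hdiv : ∀ δ > 0, ∃ (c : G) (N : ℕ), ‖c‖ < δ ∧ N • c = q) :
    ¬ ShadowingNat (fun i x => x + b i) := by
  intro hs
  obtain ⟨δ, hδ, hshadow⟩ := hs (r / 3) (by positivity)
  obtain ⟨c, N, hc, hNc⟩ := hdiv δ hδ
  obtain ⟨y, hy, hclose⟩ := hshadow _ (isPseudoOrbitNat_nsmul_add b i₀ hc)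
  have hy0 : ‖y 0‖ ≤ r / 3 := by simpa using hclose 0
  have hxN : N • (b i₀ + c) - y N = (q - (y N - y 0 - N • b i₀)) - y 0 := by
    rw [nsmul_add, hNc]; abel
  have hfar : r ≤ ‖q - (y N - y 0 - N • b i₀)‖ := hq _ (hy.sub_sub_nsmul_mem hb N)
  have hnear := hclose N
  rw [dist_eq_norm, hxN] at hnear
  linarith [norm_sub_norm_le (q - (y N - y 0 - N • b i₀)) (y 0)]

end Translations

namespace AddCircle

variable {p : ℝ}

theorem exists_norm_lt_nsmul_eq (x : AddCircle p) {δ : ℝ} (hδ : 0 < δ) :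
    ∃ (c : AddCircle p) (N : ℕ), ‖c‖ < δ ∧ N • c = x := by
  induction x using QuotientAddGroup.induction_on with | H x => ?_
  obtain ⟨N, hN⟩ := exists_nat_gt (|x| / δ)
  have hNpos : (0 : ℝ) < N := (div_nonneg (abs_nonneg x) hδ.le).trans_lt hN
  refine ⟨((x / N : ℝ) : AddCircle p), N, ?_, ?_⟩
  · calc ‖((x / N : ℝ) : AddCircle p)‖ ≤ ‖x / N‖ := QuotientAddGroup.norm_mk_le_norm
      _ = |x| / N := by rw [Real.norm_eq_abs, abs_div, Nat.abs_cast]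
      _ < δ := by rwa [div_lt_iff₀ hNpos, mul_comm, ← div_lt_iff₀ hδ]
  · rw [← coe_nsmul, nsmul_eq_mul, mul_div_cancel₀ x hNpos.ne']

theorem eq_zero_or_eq_of_mem_zmultiples_half_period {h : AddCircle p}
    (hh : h ∈ zmultiples ((p / 2 : ℝ) : AddCircle p)) :
    h = 0 ∨ h = ((p / 2 : ℝ) : AddCircle p) := by
  obtain ⟨k, rfl⟩ := mem_zmultiples_iff.mp hh
  have htwo : (2 : ℤ) • ((p / 2 : ℝ) : AddCircle p) = 0 := by
    rw [← coe_zsmul, zsmul_eq_mul, Int.cast_two, mul_div_cancel₀ p two_ne_zero, coe_period]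
  obtain ⟨j, rfl | rfl⟩ := Int.even_or_odd' k
  · left; rw [mul_comm, mul_zsmul, htwo, zsmul_zero]
  · right; rw [add_zsmul, mul_comm, mul_zsmul, htwo, zsmul_zero, zero_add, one_zsmul]

theorem norm_quarter_period_sub_of_mem_zmultiples {h : AddCircle p}
    (hh : h ∈ zmultiples ((p / 2 : ℝ) : AddCircle p)) :
    ‖((p / 4 : ℝ) : AddCircle p) - h‖ = |p| / 4 := by
  rcases eq_or_ne p 0 with rfl | hp
  · simp_all
  have hquarter : ‖((p / 4 : ℝ) : AddCircle p)‖ = |p| / 4 := by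
    rw [(norm_coe_eq_abs_iff p hp).mpr] <;> rw [abs_div, abs_of_pos (by norm_num : (0 : ℝ) < 4)]
    linarith [abs_nonneg p]
  rcases eq_zero_or_eq_of_mem_zmultiples_half_period hh with rfl | rfl
  · rw [sub_zero, hquarter]
  · rw [← coe_sub, show p / 4 - p / 2 = -(p / 4) by ring, coe_neg, norm_neg, hquarter]

end AddCircle

theorem not_shadowing_two_rotations_half_apart_general
    (β : Fin 2 → ℝ)
    (hhalf : (β 1 : AddCircle (1 : ℝ)) =
      (β 0 : AddCircle (1 : ℝ)) + ((1 / 2 : ℝ) : AddCircle (1 : ℝ))) :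
    ¬ ShadowingNat
      (fun (i : Fin 2) (x : AddCircle (1 : ℝ)) => x + (β i : AddCircle (1 : ℝ))) := by
  have hb : ∀ i,
      (β i : AddCircle (1 : ℝ)) - β 0 ∈ zmultiples ((1 / 2 : ℝ) : AddCircle (1 : ℝ)) := by
    intro i
    fin_cases i
    · simp
    · simp only [Fin.mk_one, hhalf, add_sub_cancel_left]
      exact mem_zmultiples _
  refine not_shadowingNat_translations _ _ 0 hb (q := ((1 / 4 : ℝ) : AddCircle (1 : ℝ)))
    (r := 1 / 4) (by norm_num) (fun h hh => ?_)
    (fun δ hδ => AddCircle.exists_norm_lt_nsmul_eq _ hδ)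
  rw [AddCircle.norm_quarter_period_sub_of_mem_zmultiples hh, abs_one]

/-- The IFS on the circle `ℝ/ℤ` generated by the two rotations by angles
`β 0 ∈ (0,1)` irrational and `β 1 = β 0 + 1/2 (mod 1)` does not have the shadowing
property on `ℤ₊`. -/
theorem not_shadowing_two_rotations_half_apart
    (β : Fin 2 → ℝ) (h0 : ∀ i, 0 < β i) (h1 : ∀ i, β i < 1)
    (hirr : Irrational (β 0))
    (hhalf : (β 1 : AddCircle (1 : ℝ)) =
      (β 0 : AddCircle (1 : ℝ)) + ((1 / 2 : ℝ) : AddCircle (1 : ℝ))) :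
    ¬ ShadowingNat
      (fun (i : Fin 2) (x : AddCircle (1 : ℝ)) => x + (β i : AddCircle (1 : ℝ))) :=
  not_shadowing_two_rotations_half_apart_general β hhalf
end

section
/- Let (X,d) be a compact metric space with no isolated points and F = {X; f_λ | λ ∈ Λ} a parameterized iterated function system of continuous maps. For every δ > 0 and every finite δ-pseudo orbit x = {x_i}_{i=0}^{n} of F, there exists a finite 2δ-pseudo orbit y = {y_i}_{i=0}^{n} of F whose points are pairwise distinct (y_i ≠ y_j for i ≠ j) and which satisfies d(x_i, y_i) < δ for all 0 ≤ i ≤ n; in particular x ⊆ B_δ(y). -/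
/-- In a metric space without isolated points, any ball contains a point
avoiding a given finite set. -/
lemma avoid_finset {X : Type*} [MetricSpace X]
    (hni : ∀ x : X, ∀ r > (0 : ℝ), ∃ z : X, z ≠ x ∧ dist z x < r) :
    ∀ (S : Finset X) (x : X) (r : ℝ), 0 < r → ∃ z : X, dist z x < r ∧ z ∉ S := by
  classical
  intro S
  induction S using Finset.strongInductionOn with
  | _ S ih =>
    intro x r hr
    by_cases hxS : x ∈ S
    · obtain ⟨z1, hz1ne, hz1d⟩ := hni x (r / 2) (by positivity)
      have hz1pos : 0 < dist z1 x := dist_pos.mpr hz1ne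
      have hpos : 0 < min (r - dist z1 x) (dist z1 x) := by
        apply lt_min _ hz1pos
        linarith
      obtain ⟨z, hzd, hzS⟩ := ih (S.erase x) (Finset.erase_ssubset hxS) z1 _ hpos
      have hzz1 : dist z z1 < r - dist z1 x := lt_of_lt_of_le hzd (min_le_left _ _)
      have hzz1' : dist z z1 < dist z1 x := lt_of_lt_of_le hzd (min_le_right _ _)
      refine ⟨z, ?_, ?_⟩
      · calc dist z x ≤ dist z z1 + dist z1 x := dist_triangle _ _ _
          _ < (r - dist z1 x) + dist z1 x := by linarith
          _ = r := by ring
      · have hzx : z ≠ x := by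
          intro h
          rw [h, dist_comm] at hzz1'
          exact lt_irrefl _ hzz1'
        intro hmem
        exact hzS (Finset.mem_erase.mpr ⟨hzx, hmem⟩)
    · exact ⟨x, by simpa using hr, hxS⟩

/-- In a compact metric space without isolated points, every finite `δ`-pseudo orbit
`x = {x_i}_{i=0}^{n}` of an IFS of continuous maps can be approximated, within `δ`
pointwise, by a finite `2δ`-pseudo orbit `y = {y_i}_{i=0}^{n}` whose points are
pairwise distinct; in particular `x ⊆ B_δ(y)`. -/
theorem exists_distinct_two_delta_pseudo_orbit
    {X Λ : Type*} [MetricSpace X] [CompactSpace X] [Finite Λ] [Nonempty Λ]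
    (hni : ∀ x : X, ∀ r > (0 : ℝ), ∃ z : X, z ≠ x ∧ dist z x < r)
    (f : Λ → X → X) (hf : ∀ lam : Λ, Continuous (f lam))
    (δ : ℝ) (hδ : 0 < δ) (n : ℕ) (x : Fin (n + 1) → X) (lam : Fin n → Λ)
    (hx : ∀ i : Fin n, dist (f (lam i) (x i.castSucc)) (x i.succ) < δ) :
    ∃ y : Fin (n + 1) → X,
      (∃ μ : Fin n → Λ, ∀ i : Fin n,
        dist (f (μ i) (y i.castSucc)) (y i.succ) < 2 * δ) ∧
      Function.Injective y ∧
      ∀ i : Fin (n + 1), dist (x i) (y i) < δ := by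
  classical
  induction n with
  | zero =>
      refine ⟨x, ⟨fun i => i.elim0, fun i => i.elim0⟩, ?_, fun i => by simpa using hδ⟩
      intro a b _
      exact Fin.ext (by omega)
  | succ n IH =>
      -- apply IH to the tail
      obtain ⟨y', ⟨μ', hμ'⟩, hinj', hclose'⟩ :=
        IH (fun i => x i.succ) (fun i => lam i.succ)
          (fun i => by
            have := hx i.succ
            simpa [← Fin.succ_castSucc] using this)
      -- choose y₀ near x 0
      have hd' : dist (x 1) (y' 0) < δ := by simpa using hclose' 0
      set ε : ℝ := δ - dist (x 1) (y' 0) with hε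
      have hεpos : 0 < ε := by simp [hε]; linarith
      -- continuity of f (lam 0) at x 0
      obtain ⟨ρ, hρpos, hρ⟩ :=
        Metric.continuous_iff.mp (hf (lam 0)) (x 0) ε hεpos
      obtain ⟨y0, hy0d, hy0S⟩ :=
        avoid_finset hni (Finset.univ.image y') (x 0) (min δ ρ)
          (lt_min hδ hρpos)
      have hy0δ : dist y0 (x 0) < δ := lt_of_lt_of_le hy0d (min_le_left _ _)
      have hy0ρ : dist y0 (x 0) < ρ := lt_of_lt_of_le hy0d (min_le_right _ _)
      have hy0f : dist (f (lam 0) y0) (f (lam 0) (x 0)) < ε := hρ y0 hy0ρ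
      have hy0ne : ∀ i, y0 ≠ y' i := by
        intro i h
        exact hy0S (Finset.mem_image.mpr ⟨i, Finset.mem_univ _, h.symm⟩)
      refine ⟨Fin.cons y0 y', ⟨Fin.cons (lam 0) μ', ?_⟩, ?_, ?_⟩
      · intro i
        induction i using Fin.cases with
        | zero =>
            have h1 : dist (f (lam 0) y0) (y' 0) < 2 * δ := by
              calc dist (f (lam 0) y0) (y' 0)
                  ≤ dist (f (lam 0) y0) (f (lam 0) (x 0)) +
                    dist (f (lam 0) (x 0)) (x 1) + dist (x 1) (y' 0) :=
                    dist_triangle4 _ _ _ _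
                _ < ε + δ + dist (x 1) (y' 0) := by
                    have h0 : dist (f (lam 0) (x 0)) (x 1) < δ := by
                      have := hx 0
                      simpa using this
                    linarith
                _ = 2 * δ := by simp [hε]; ring
            simpa using h1
        | succ j =>
            have := hμ' j
            simpa [← Fin.succ_castSucc] using this
      · intro a b hab
        induction a using Fin.cases with
        | zero =>
            induction b using Fin.cases with
            | zero => rfl
            | succ j =>
                simp only [Fin.cons_zero, Fin.cons_succ] at hab
                exact absurd hab (hy0ne j)
        | succ i =>
            induction b using Fin.cases with
            | zero =>
                simp only [Fin.cons_zero, Fin.cons_succ] at hab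
                exact absurd hab.symm (hy0ne i)
            | succ j =>
                simp only [Fin.cons_succ] at hab
                exact congrArg Fin.succ (hinj' hab)
      · intro i
        induction i using Fin.cases with
        | zero => simpa [dist_comm] using hy0δ
        | succ j => simpa using hclose' j
end

section
/- Let (X,d) be a compact metric space, Λ a finite nonempty set, and V = {V_1, …, V_k} a finite open cover of X. Then the set C_V = {F ∈ H_Λ(X) : J_G = J_F for all G sufficiently close to F in ρ} is an open and dense subset of (H_Λ(X), ρ). -/
/-- The metric `ρ` on the space `H_Λ(X)` of IFS of homeomorphisms:
`ρ(F,G) = sup_{λ,x} max (dist (F λ x) (G λ x)) (dist (F λ ⁻¹ x) (G λ ⁻¹ x))`. -/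
noncomputable def rhoIFS {X Λ : Type*} [MetricSpace X] (f g : Λ → X ≃ₜ X) : ℝ :=
  ⨆ p : Λ × X, max (dist (f p.1 p.2) (g p.1 p.2))
    (dist ((f p.1).symm p.2) ((g p.1).symm p.2))

/-- A two-sided sequence `x : ℤ → X` is an orbit of the IFS of homeomorphisms `f`. -/
def IsOrbitZ {X Λ : Type*} [TopologicalSpace X] (f : Λ → X ≃ₜ X) (x : ℤ → X) : Prop :=
  ∃ σ : ℤ → Λ, ∀ n : ℤ, x (n + 1) = f (σ n) (x n)

/-- Given a finite open cover `V`, `JFam V f` is the family of sets `L` of indices such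
that some orbit of `f` meets `V j` for every `j ∈ L`. -/
def JFam {X Λ : Type*} [TopologicalSpace X] {k : ℕ} (V : Fin k → Set X) (f : Λ → X ≃ₜ X) :
    Set (Set (Fin k)) :=
  {L | ∃ x : ℤ → X, IsOrbitZ f x ∧ ∀ j ∈ L, ∃ n : ℤ, x n ∈ V j}

/-- `C_V` is the set of IFS `F ∈ H_Λ(X)` such that `J_G = J_F` for all `G` sufficiently
`ρ`-close to `F`. -/
def CV {X Λ : Type*} [MetricSpace X] {k : ℕ} (V : Fin k → Set X) :
    Set (Λ → X ≃ₜ X) :=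
  {f | ∃ η > (0 : ℝ), ∀ g : Λ → X ≃ₜ X, rhoIFS f g < η → JFam V g = JFam V f}

section Aux

variable {X Λ : Type*} [MetricSpace X]

lemma exists_pos_le_forall {ι : Type*} [Finite ι] (d : ι → ℝ) (hd : ∀ i, 0 < d i) :
    ∃ δ > 0, ∀ i, δ ≤ d i := by
  cases isEmpty_or_nonempty ι with
  | inl h => exact ⟨1, one_pos, fun i => (h.false i).elim⟩
  | inr h =>
    haveI := Fintype.ofFinite ι
    refine ⟨Finset.univ.inf' Finset.univ_nonempty d, ?_, fun i => Finset.inf'_le d (Finset.mem_univ i)⟩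
    exact (Finset.lt_inf'_iff _).mpr fun i _ => hd i

lemma rho_bdd [CompactSpace X] (f g : Λ → X ≃ₜ X) :
    BddAbove (Set.range fun p : Λ × X => max (dist (f p.1 p.2) (g p.1 p.2))
      (dist ((f p.1).symm p.2) ((g p.1).symm p.2))) := by
  refine ⟨Metric.diam (Set.univ : Set X), ?_⟩
  rintro r ⟨p, rfl⟩
  have hb := isCompact_univ (X := X) |>.isBounded
  exact max_le (Metric.dist_le_diam_of_mem hb (Set.mem_univ _) (Set.mem_univ _))
    (Metric.dist_le_diam_of_mem hb (Set.mem_univ _) (Set.mem_univ _))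

lemma rho_nonneg [CompactSpace X] (f g : Λ → X ≃ₜ X) : 0 ≤ rhoIFS f g :=
  Real.iSup_nonneg fun p => le_max_of_le_left dist_nonneg

lemma dist_le_rho [CompactSpace X] (f g : Λ → X ≃ₜ X) (l : Λ) (x : X) :
    dist (f l x) (g l x) ≤ rhoIFS f g :=
  (le_max_left _ _).trans (le_ciSup (rho_bdd f g) (⟨l, x⟩ : Λ × X))

lemma dist_symm_le_rho [CompactSpace X] (f g : Λ → X ≃ₜ X) (l : Λ) (x : X) :
    dist ((f l).symm x) ((g l).symm x) ≤ rhoIFS f g :=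
  (le_max_right _ _).trans (le_ciSup (rho_bdd f g) (⟨l, x⟩ : Λ × X))

lemma rho_self [CompactSpace X] (f : Λ → X ≃ₜ X) : rhoIFS f f = 0 :=
  le_antisymm (Real.iSup_le (fun p => by simp) le_rfl) (rho_nonneg f f)

lemma rho_triangle [CompactSpace X] (f g h : Λ → X ≃ₜ X) :
    rhoIFS f h ≤ rhoIFS f g + rhoIFS g h := by
  refine Real.iSup_le (fun p => ?_) (add_nonneg (rho_nonneg f g) (rho_nonneg g h))
  refine max_le ?_ ?_
  · exact (dist_triangle _ (g p.1 p.2) _).trans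
      (add_le_add (dist_le_rho f g p.1 p.2) (dist_le_rho g h p.1 p.2))
  · exact (dist_triangle _ ((g p.1).symm p.2) _).trans
      (add_le_add (dist_symm_le_rho f g p.1 p.2) (dist_symm_le_rho g h p.1 p.2))

end Aux

section Orb

variable {X Λ : Type*} [TopologicalSpace X]

def fwdO (g : Λ → X ≃ₜ X) (σ : ℤ → Λ) (p : X) : ℕ → X
  | 0 => p
  | n+1 => g (σ (Int.ofNat n)) (fwdO g σ p n)

def bwdO (g : Λ → X ≃ₜ X) (σ : ℤ → Λ) (p : X) : ℕ → X
  | 0 => (g (σ (Int.negSucc 0))).symm p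
  | n+1 => (g (σ (Int.negSucc (n+1)))).symm (bwdO g σ p n)

def orbitFrom (g : Λ → X ≃ₜ X) (σ : ℤ → Λ) (p : X) : ℤ → X
  | Int.ofNat n => fwdO g σ p n
  | Int.negSucc n => bwdO g σ p n

lemma orbitFrom_zero (g : Λ → X ≃ₜ X) (σ : ℤ → Λ) (p : X) : orbitFrom g σ p 0 = p := rfl

lemma orbitFrom_step (g : Λ → X ≃ₜ X) (σ : ℤ → Λ) (p : X) (n : ℤ) :
    orbitFrom g σ p (n + 1) = g (σ n) (orbitFrom g σ p n) := by
  cases n with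
  | ofNat m =>
    have h : (Int.ofNat m) + 1 = Int.ofNat (m + 1) := rfl
    rw [h]; rfl
  | negSucc m =>
    cases m with
    | zero =>
      have h : Int.negSucc 0 + 1 = Int.ofNat 0 := rfl
      rw [h]
      show p = g (σ (Int.negSucc 0)) ((g (σ (Int.negSucc 0))).symm p)
      rw [Homeomorph.apply_symm_apply]
    | succ m =>
      have h : Int.negSucc (m + 1) + 1 = Int.negSucc m := rfl
      rw [h]
      show bwdO g σ p m = g (σ (Int.negSucc (m+1))) ((g (σ (Int.negSucc (m+1)))).symm (bwdO g σ p m))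
      rw [Homeomorph.apply_symm_apply]

lemma orbit_eq (f : Λ → X ≃ₜ X) (σ : ℤ → Λ) (u v : ℤ → X)
    (hu : ∀ n, u (n + 1) = f (σ n) (u n)) (hv : ∀ n, v (n + 1) = f (σ n) (v n))
    (s : ℤ) (h : u s = v s) : ∀ n, u n = v n := by
  intro n
  refine Int.inductionOn' n s h (fun m _ ih => ?_) (fun m _ ih => ?_)
  · rw [hu, hv, ih]
  · have h1 := hu (m - 1); have h2 := hv (m - 1)
    rw [sub_add_cancel] at h1 h2
    exact (f (σ (m - 1))).injective (by rw [← h1, ← h2, ih])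

end Orb

section Close

variable {X Λ : Type*} [MetricSpace X] [CompactSpace X] [Finite Λ] [Nonempty Λ]

lemma key_step (f : Λ → X ≃ₜ X) {δ : ℝ} (hδ : 0 < δ) :
    ∃ η, 0 < η ∧ η ≤ δ ∧ ∀ (g : Λ → X ≃ₜ X) (l : Λ) (p q : X),
      rhoIFS f g < η → dist p q < η →
      dist (g l p) (f l q) < δ ∧ dist ((g l).symm p) ((f l).symm q) < δ := by
  have huc : ∀ l : Λ, ∃ θ > 0, ∀ p q : X, dist p q < θ →
      dist (f l p) (f l q) < δ / 2 ∧ dist ((f l).symm p) ((f l).symm q) < δ / 2 := by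
    intro l
    obtain ⟨θ₁, hθ₁, h1⟩ := Metric.uniformContinuous_iff.mp
      (CompactSpace.uniformContinuous_of_continuous (f l).continuous) (δ / 2) (by positivity)
    obtain ⟨θ₂, hθ₂, h2⟩ := Metric.uniformContinuous_iff.mp
      (CompactSpace.uniformContinuous_of_continuous (f l).symm.continuous) (δ / 2) (by positivity)
    exact ⟨min θ₁ θ₂, lt_min hθ₁ hθ₂, fun p q h =>
      ⟨h1 (h.trans_le (min_le_left _ _)), h2 (h.trans_le (min_le_right _ _))⟩⟩
  choose θ hθpos hθ using huc
  obtain ⟨θ₀, hθ₀, hθ₀le⟩ := exists_pos_le_forall θ hθpos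
  refine ⟨min (δ / 2) θ₀, lt_min (by positivity) hθ₀, min_le_of_left_le (by linarith), ?_⟩
  intro g l p q hρ hpq
  have hpq' : dist p q < θ l := hpq.trans_le ((min_le_right _ _).trans (hθ₀le l))
  have h1 : dist (g l p) (f l p) ≤ rhoIFS f g := by rw [dist_comm]; exact dist_le_rho f g l p
  have h2 : dist ((g l).symm p) ((f l).symm p) ≤ rhoIFS f g := by
    rw [dist_comm]; exact dist_symm_le_rho f g l p
  have hρ' : rhoIFS f g < δ / 2 := hρ.trans_le (min_le_left _ _)
  constructor
  · calc dist (g l p) (f l q) ≤ dist (g l p) (f l p) + dist (f l p) (f l q) := dist_triangle _ _ _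
      _ < δ / 2 + δ / 2 := add_lt_add_of_le_of_lt (h1.trans hρ'.le) (hθ l p q hpq').1
      _ = δ := by ring
  · calc dist ((g l).symm p) ((f l).symm q)
        ≤ dist ((g l).symm p) ((f l).symm p) + dist ((f l).symm p) ((f l).symm q) :=
          dist_triangle _ _ _
      _ < δ / 2 + δ / 2 := add_lt_add_of_le_of_lt (h2.trans hρ'.le) (hθ l p q hpq').2
      _ = δ := by ring

lemma fwd_close (f : Λ → X ≃ₜ X) (m : ℕ) : ∀ {δ : ℝ}, 0 < δ → ∃ η, 0 < η ∧ η ≤ δ ∧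
    ∀ (g : Λ → X ≃ₜ X) (σ : ℤ → Λ) (p q : X), rhoIFS f g < η → dist p q < η →
      ∀ i ≤ m, dist (fwdO g σ p i) (fwdO f σ q i) < δ := by
  induction m with
  | zero =>
    intro δ hδ
    refine ⟨δ, hδ, le_rfl, fun g σ p q _ hpq i hi => ?_⟩
    have : i = 0 := Nat.le_zero.mp hi
    subst this
    exact hpq
  | succ m ih =>
    intro δ hδ
    obtain ⟨η₁, hη₁, hη₁δ, hstep⟩ := key_step f hδ
    obtain ⟨η₂, hη₂, hη₂₁, hIH⟩ := ih hη₁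
    refine ⟨η₂, hη₂, hη₂₁.trans hη₁δ, fun g σ p q hρ hpq i hi => ?_⟩
    rcases Nat.lt_or_ge i (m + 1) with h | h
    · exact (hIH g σ p q hρ hpq i (Nat.lt_succ_iff.mp h)).trans_le hη₁δ
    · have hi' : i = m + 1 := le_antisymm hi h
      subst hi'
      exact (hstep g (σ (Int.ofNat m)) _ _ (hρ.trans_le hη₂₁)
        (hIH g σ p q hρ hpq m le_rfl)).1

lemma bwd_close (f : Λ → X ≃ₜ X) (m : ℕ) : ∀ {δ : ℝ}, 0 < δ → ∃ η, 0 < η ∧ η ≤ δ ∧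
    ∀ (g : Λ → X ≃ₜ X) (σ : ℤ → Λ) (p q : X), rhoIFS f g < η → dist p q < η →
      ∀ i ≤ m, dist (bwdO g σ p i) (bwdO f σ q i) < δ := by
  induction m with
  | zero =>
    intro δ hδ
    obtain ⟨η, hη, hηδ, hstep⟩ := key_step f hδ
    refine ⟨η, hη, hηδ, fun g σ p q hρ hpq i hi => ?_⟩
    have : i = 0 := Nat.le_zero.mp hi
    subst this
    exact (hstep g (σ (Int.negSucc 0)) p q hρ hpq).2
  | succ m ih =>
    intro δ hδ
    obtain ⟨η₁, hη₁, hη₁δ, hstep⟩ := key_step f hδ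
    obtain ⟨η₂, hη₂, hη₂₁, hIH⟩ := ih hη₁
    refine ⟨η₂, hη₂, hη₂₁.trans hη₁δ, fun g σ p q hρ hpq i hi => ?_⟩
    rcases Nat.lt_or_ge i (m + 1) with h | h
    · exact (hIH g σ p q hρ hpq i (Nat.lt_succ_iff.mp h)).trans_le hη₁δ
    · have hi' : i = m + 1 := le_antisymm hi h
      subst hi'
      exact (hstep g (σ (Int.negSucc (m + 1))) _ _ (hρ.trans_le hη₂₁)
        (hIH g σ p q hρ hpq m le_rfl)).2

lemma orbit_close (f : Λ → X ≃ₜ X) (M : ℕ) {δ : ℝ} (hδ : 0 < δ) :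
    ∃ η > 0, ∀ (g : Λ → X ≃ₜ X) (σ : ℤ → Λ) (p : X), rhoIFS f g < η →
      ∀ n : ℤ, n.natAbs ≤ M → dist (orbitFrom g σ p n) (orbitFrom f σ p n) < δ := by
  obtain ⟨η₁, hη₁, _, hf⟩ := fwd_close f M hδ
  obtain ⟨η₂, hη₂, _, hb⟩ := bwd_close f M hδ
  refine ⟨min η₁ η₂, lt_min hη₁ hη₂, fun g σ p hρ n hn => ?_⟩
  cases n with
  | ofNat i =>
    exact hf g σ p p (hρ.trans_le (min_le_left _ _)) (by simpa using hη₁) i (by simpa using hn)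
  | negSucc i =>
    have hi : i ≤ M := by simp [Int.natAbs] at hn; omega
    exact hb g σ p p (hρ.trans_le (min_le_right _ _)) (by simpa using hη₂) i hi

end Close


section Main

variable {X Λ : Type*} [MetricSpace X] [CompactSpace X] [Finite Λ] [Nonempty Λ]
  {k : ℕ}

lemma JFam_stable (V : Fin k → Set X) (hVopen : ∀ j, IsOpen (V j))
    (f : Λ → X ≃ₜ X) (L : Set (Fin k)) (hL : L ∈ JFam V f) :
    ∃ η > 0, ∀ g : Λ → X ≃ₜ X, rhoIFS f g < η → L ∈ JFam V g := by
  classical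
  obtain ⟨x, ⟨σ, hσ⟩, hmeet⟩ := hL
  have hmeet' : ∀ j : Fin k, ∃ n : ℤ, j ∈ L → x n ∈ V j := by
    intro j
    by_cases hj : j ∈ L
    · exact (hmeet j hj).imp fun n hn _ => hn
    · exact ⟨0, fun h => absurd h hj⟩
  choose nfun hnfun using hmeet'
  set N : ℕ := Finset.univ.sup fun j => (nfun j).natAbs with hN
  have hNle : ∀ j : Fin k, (nfun j).natAbs ≤ N := fun j =>
    Finset.le_sup (f := fun j => (nfun j).natAbs) (Finset.mem_univ j)
  have h_d : ∀ j : Fin k, ∃ d, 0 < d ∧ (j ∈ L → Metric.ball (x (nfun j)) d ⊆ V j) := by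
    intro j
    by_cases hj : j ∈ L
    · obtain ⟨d, hd, hsub⟩ := Metric.isOpen_iff.mp (hVopen j) _ (hnfun j hj)
      exact ⟨d, hd, fun _ => hsub⟩
    · exact ⟨1, one_pos, fun h => absurd h hj⟩
  choose dfun hdpos hdsub using h_d
  obtain ⟨δ, hδ, hδle⟩ := exists_pos_le_forall dfun hdpos
  obtain ⟨η, hη, hclose⟩ := orbit_close f (2 * N) hδ
  refine ⟨η, hη, fun g hρ => ?_⟩
  set σ' : ℤ → Λ := fun i => σ (i - (N : ℤ)) with hσ'
  set p : X := x (-(N : ℤ)) with hp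
  set y : ℤ → X := fun n => orbitFrom g σ' p (n + N) with hy
  have hyo : ∀ n : ℤ, y (n + 1) = g (σ n) (y n) := by
    intro n
    have h1 : (n + 1 + (N : ℤ)) = (n + N) + 1 := by ring
    show orbitFrom g σ' p (n + 1 + N) = _
    rw [h1, orbitFrom_step]
    have h2 : σ' (n + N) = σ n := by simp [hσ']
    rw [h2]
  have hx : ∀ n : ℤ, x n = orbitFrom f σ' p (n + N) := by
    have hu : ∀ n : ℤ, x (n + 1 - N) = f (σ' n) (x (n - N)) := by
      intro n
      have h1 : n + 1 - (N : ℤ) = (n - N) + 1 := by ring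
      rw [h1, hσ (n - N)]
    have key := orbit_eq f σ' (fun n => x (n - N)) (orbitFrom f σ' p)
      (fun n => hu n) (orbitFrom_step f σ' p) 0 (by simp [hp, orbitFrom_zero])
    intro n
    have h := key (n + N)
    simpa using h
  refine ⟨y, ⟨σ, hyo⟩, fun j hj => ⟨nfun j, ?_⟩⟩
  have hdist : dist (y (nfun j)) (x (nfun j)) < δ := by
    rw [hx (nfun j)]
    exact hclose g σ' p hρ (nfun j + N) (by have := hNle j; omega)
  exact hdsub j hj (by exact Metric.mem_ball.mpr (hdist.trans_le (hδle j)))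

lemma JFam_lsc (V : Fin k → Set X) (hVopen : ∀ j, IsOpen (V j)) (f : Λ → X ≃ₜ X) :
    ∃ η > 0, ∀ g : Λ → X ≃ₜ X, rhoIFS f g < η → JFam V f ⊆ JFam V g := by
  classical
  have h : ∀ L : Set (Fin k), ∃ η > 0, ∀ g : Λ → X ≃ₜ X,
      rhoIFS f g < η → L ∈ JFam V f → L ∈ JFam V g := by
    intro L
    by_cases hL : L ∈ JFam V f
    · obtain ⟨η, hη, hs⟩ := JFam_stable V hVopen f L hL
      exact ⟨η, hη, fun g hg _ => hs g hg⟩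
    · exact ⟨1, one_pos, fun g _ h' => absurd h' hL⟩
  choose ηf hηf hf using h
  obtain ⟨η, hη, hle⟩ := exists_pos_le_forall ηf hηf
  exact ⟨η, hη, fun g hg L hL => hf L g (hg.trans_le (hle L)) hL⟩

theorem CV_open_and_dense'
    (V : Fin k → Set X)
    (hVopen : ∀ j, IsOpen (V j)) (hVcover : ⋃ j, V j = Set.univ) :
    (∀ f ∈ CV (Λ := Λ) V, ∃ η > (0 : ℝ), ∀ g : Λ → X ≃ₜ X,
        rhoIFS f g < η → g ∈ CV (Λ := Λ) V) ∧
    (∀ f : Λ → X ≃ₜ X, ∀ η > (0 : ℝ), ∃ g ∈ CV (Λ := Λ) V, rhoIFS f g < η) := by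
  classical
  constructor
  · rintro f ⟨η, hη, hstab⟩
    refine ⟨η / 2, by positivity, fun g hg => ⟨η / 2, by positivity, fun h hgh => ?_⟩⟩
    have h1 : rhoIFS f h < η := ((rho_triangle f g h).trans_lt (by linarith))
    rw [hstab h h1, hstab g (hg.trans (by linarith))]
  · intro f η hη
    set B : Set (Λ → X ≃ₜ X) := {g | rhoIFS f g < η / 2} with hB
    have hfB : f ∈ B := by simp only [hB, Set.mem_setOf_eq, rho_self]; positivity
    set A : Set ℕ := {n | ∃ g ∈ B, n = (JFam V g).ncard} with hA
    have hAne : A.Nonempty := ⟨(JFam V f).ncard, f, hfB, rfl⟩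
    have hAbdd : BddAbove A := by
      refine ⟨(Set.univ : Set (Set (Fin k))).ncard, ?_⟩
      rintro n ⟨g, _, rfl⟩
      exact Set.ncard_le_ncard (Set.subset_univ _) Set.finite_univ
    obtain ⟨g₀, hg₀B, hg₀card⟩ : ∃ g₀ ∈ B, sSup A = (JFam V g₀).ncard := Nat.sSup_mem hAne hAbdd
    have hmax : ∀ h ∈ B, (JFam V h).ncard ≤ (JFam V g₀).ncard := by
      intro h hh
      rw [← hg₀card]
      exact le_csSup hAbdd ⟨h, hh, rfl⟩
    obtain ⟨η₁, hη₁, hlsc⟩ := JFam_lsc V hVopen g₀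
    have hg₀B' : rhoIFS f g₀ < η / 2 := hg₀B
    refine ⟨g₀, ⟨min η₁ (η / 2 - rhoIFS f g₀), lt_min hη₁ (by linarith), fun h hh => ?_⟩,
      hg₀B'.trans (by linarith)⟩
    have hhB : h ∈ B := by
      have := rho_triangle f g₀ h
      simp only [hB, Set.mem_setOf_eq]
      have h2 : rhoIFS g₀ h < η / 2 - rhoIFS f g₀ := hh.trans_le (min_le_right _ _)
      linarith
    have hsub : JFam V g₀ ⊆ JFam V h := hlsc h (hh.trans_le (min_le_left _ _))
    exact (Set.eq_of_subset_of_ncard_le hsub (hmax h hhB) (Set.toFinite _)).symm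


end Main

/-- Given a finite open cover `V` of a compact metric space `X`, the set `C_V` is an
open and dense subset of `(H_Λ(X), ρ)`. -/
theorem CV_open_and_dense
    {X Λ : Type*} [MetricSpace X] [CompactSpace X] [Finite Λ] [Nonempty Λ]
    {k : ℕ} (V : Fin k → Set X)
    (hVopen : ∀ j, IsOpen (V j)) (hVcover : ⋃ j, V j = Set.univ) :
    (∀ f ∈ CV (Λ := Λ) V, ∃ η > (0 : ℝ), ∀ g : Λ → X ≃ₜ X,
        rhoIFS f g < η → g ∈ CV (Λ := Λ) V) ∧
    (∀ f : Λ → X ≃ₜ X, ∀ η > (0 : ℝ), ∃ g ∈ CV (Λ := Λ) V, rhoIFS f g < η) :=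
  CV_open_and_dense' V hVopen hVcover
end

section
/- Let (X,d) be a compact metric space with no isolated points which is generalized homogeneous, let Λ be a finite nonempty set, let ε > 0, and let V = {V_1, …, V_k} be a finite open cover of X by sets of diameter less than ε. Then every F ∈ C_V satisfies the following: there exists δ > 0 such that for every δ-pseudo orbit x = (x_n)_{n∈ℤ} of F there is an orbit z' = (z'_n)_{n∈ℤ} of F with z' ⊆ B_{3ε}(x). -/
/-- `δ`-pseudo orbit on `ℤ` of an IFS of homeomorphisms. -/
def IsPseudoOrbitZ {X Λ : Type*} [MetricSpace X] (f : Λ → X ≃ₜ X) (δ : ℝ)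
    (x : ℤ → X) : Prop :=
  ∃ σ : ℤ → Λ, ∀ n : ℤ, dist (x (n + 1)) (f (σ n) (x n)) < δ

/-- `X` is generalized homogeneous: for every `ε > 0` there is `δ > 0` such that any two
tuples of pairwise distinct points which are `δ`-close pointwise are connected by a
homeomorphism `h` with `d₀(h, id) ≤ ε`. -/
def GenHomogeneous (X : Type*) [MetricSpace X] : Prop :=
  ∀ ε > (0 : ℝ), ∃ δ > (0 : ℝ), ∀ (n : ℕ) (x y : Fin n → X),
    Function.Injective x → Function.Injective y →
    (∀ i, dist (x i) (y i) ≤ δ) →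
    ∃ h : X ≃ₜ X, (∀ i, h (x i) = y i) ∧
      ∀ z : X, max (dist (h z) z) (dist (h.symm z) z) ≤ ε


open Filter Metric Topology

/-- Auxiliary: a nonempty set which is forward and backward invariant under the IFS
contains a full two-sided orbit. -/
lemma exists_orbitZ_in_set {X Λ : Type*} [TopologicalSpace X] (f : Λ → X ≃ₜ X) (K : Set X)
    (hne : K.Nonempty) (hfwd : ∀ p ∈ K, ∃ lam : Λ, f lam p ∈ K)
    (hbwd : ∀ p ∈ K, ∃ (lam : Λ) (q : X), q ∈ K ∧ f lam q = p) :
    ∃ z : ℤ → X, IsOrbitZ f z ∧ ∀ n : ℤ, z n ∈ K := by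
  classical
  obtain ⟨p₀, hp₀⟩ := hne
  have hfwd' : ∀ q : K, ∃ lam : Λ, f lam (q : X) ∈ K := fun q => hfwd q q.2
  choose nextL hnextL using hfwd'
  have hbwd' : ∀ q : K, ∃ (lam : Λ) (r : X), r ∈ K ∧ f lam r = (q : X) := fun q => hbwd q q.2
  choose prevL prevP hprevK hprevEq using hbwd'
  set nextF : K → K := fun q => ⟨f (nextL q) q, hnextL q⟩ with hnextF
  set prevF : K → K := fun q => ⟨prevP q, hprevK q⟩ with hprevF
  set q0 : K := ⟨p₀, hp₀⟩ with hq0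
  set s : ℤ → K := fun n => if 0 ≤ n then nextF^[n.toNat] q0 else prevF^[(-n).toNat] q0 with hs
  refine ⟨fun n => (s n : X), ⟨fun n => if 0 ≤ n then nextL (s n)
    else prevL (prevF^[(-(n+1)).toNat] q0), ?_⟩, fun n => (s n).2⟩
  intro n
  by_cases hn : 0 ≤ n
  · have h1 : (0:ℤ) ≤ n + 1 := by omega
    have h2 : (n + 1).toNat = n.toNat + 1 := by omega
    have e1 : s (n + 1) = nextF (s n) := by
      simp only [hs, if_pos hn, if_pos h1, h2, Function.iterate_succ_apply']
    show (s (n+1) : X) = f (if 0 ≤ n then nextL (s n) else prevL (prevF^[(-(n+1)).toNat] q0)) (s n : X)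
    rw [if_pos hn, e1]
  · have e2 : s n = prevF (prevF^[(-(n+1)).toNat] q0) := by
      have h3 : (-n).toNat = (-(n+1)).toNat + 1 := by omega
      simp only [hs, if_neg hn, h3, Function.iterate_succ_apply']
    have e1 : (s (n+1) : X) = ((prevF^[(-(n+1)).toNat] q0 : K) : X) := by
      by_cases h4 : 0 ≤ n + 1
      · have h5 : n + 1 = 0 := by omega
        have h6 : (-(n+1)).toNat = 0 := by omega
        have h7 : (n+1).toNat = 0 := by omega
        simp only [hs, if_pos h4, h6, h7, Function.iterate_zero, id]
      · simp only [hs, if_neg h4]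
    show (s (n+1) : X) = f (if 0 ≤ n then nextL (s n) else prevL (prevF^[(-(n+1)).toNat] q0)) (s n : X)
    rw [if_neg hn, e1, e2]
    exact (hprevEq _).symm

/-- If `X` is a compact, generalized homogeneous metric space with no isolated points and
`V` is a finite open cover by sets of diameter `< ε`, then every `F ∈ C_V` has the
following property: there is `δ > 0` such that every `δ`-pseudo orbit `x` on `ℤ` admits
an orbit `z'` of `F` with `z' ⊆ B_{3ε}(x)`. -/
theorem CV_mem_weak_shadow
    {X Λ : Type*} [MetricSpace X] [CompactSpace X] [Finite Λ] [Nonempty Λ]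
    (hgh : GenHomogeneous X)
    (hni : ∀ x : X, ∀ r > (0 : ℝ), ∃ z : X, z ≠ x ∧ dist z x < r)
    (ε : ℝ) (hε : 0 < ε) {k : ℕ} (V : Fin k → Set X)
    (hVopen : ∀ j, IsOpen (V j)) (hVcover : ⋃ j, V j = Set.univ)
    (hVdiam : ∀ j, Metric.diam (V j) < ε)
    (f : Λ → X ≃ₜ X) (hfCV : f ∈ CV (Λ := Λ) V) :
    ∃ δ > (0 : ℝ), ∀ x : ℤ → X, IsPseudoOrbitZ f δ x →
      ∃ z : ℤ → X, IsOrbitZ f z ∧ ∀ n : ℤ, ∃ m : ℤ, dist (z n) (x m) < 3 * ε := by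
  classical
  by_contra hcon
  push_neg at hcon
  have hxall : ∀ i : ℕ, ∃ x : ℤ → X, IsPseudoOrbitZ f (1 / ((i : ℝ) + 1)) x ∧
      ∀ z, IsOrbitZ f z → ∃ n : ℤ, ∀ m : ℤ, 3 * ε ≤ dist (z n) (x m) := by
    intro i
    obtain ⟨x, hx1, hx2⟩ := hcon (1 / ((i : ℝ) + 1)) (by positivity)
    refine ⟨x, hx1, fun z hz => ?_⟩
    obtain ⟨n, hn⟩ := hx2 z hz
    exact ⟨n, fun m => hn m⟩
  choose x hxp hxbad using hxall
  choose σs hσs using hxp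
  set U : Ultrafilter ℕ := Ultrafilter.of atTop with hUdef
  have hUle : (U : Filter ℕ) ≤ atTop := Ultrafilter.of_le _
  have hδ0 : Tendsto (fun i : ℕ => (1 : ℝ) / (i + 1)) (U : Filter ℕ) (𝓝 0) :=
    tendsto_one_div_add_atTop_nhds_zero_nat.mono_left hUle
  -- every sequence has a limit along U
  have hlim : ∀ w : ℕ → X, ∃ q : X, Tendsto w (U : Filter ℕ) (𝓝 q) := by
    intro w
    obtain ⟨q, -, hq⟩ := isCompact_univ.ultrafilter_le_nhds (U.map w)
      (by simp [le_principal_iff])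
    rw [Ultrafilter.coe_map] at hq
    exact ⟨q, hq⟩
  have hdistlim : ∀ (w : ℕ → X) (q : X), Tendsto w (U : Filter ℕ) (𝓝 q) →
      Tendsto (fun i => dist q (w i)) (U : Filter ℕ) (𝓝 0) := by
    intro w q hw
    simpa using (tendsto_const_nhds (x := q)).dist hw
  -- constant value along U for functions into the finite set Λ
  have hΛ : ∀ L : ℕ → Λ, ∃ lam : Λ, {i | L i = lam} ∈ U := by
    intro L
    by_contra hno
    push_neg at hno
    have hcompl : ∀ lam : Λ, {i | L i ≠ lam} ∈ U := by
      intro lam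
      have h := hno lam
      rw [← Ultrafilter.compl_mem_iff_notMem] at h
      simpa [Set.compl_setOf] using h
    have hint : (⋂ lam : Λ, {i | L i ≠ lam}) ∈ U := Filter.iInter_mem.mpr hcompl
    obtain ⟨i, hi⟩ := Filter.nonempty_of_mem hint
    simp only [Set.mem_iInter, Set.mem_setOf_eq] at hi
    exact hi (L i) rfl
  -- the set of ultrafilter cluster values of the pseudo-orbit traces
  set K : Set X := {p | ∃ m : ℕ → ℤ,
    Tendsto (fun i => dist p (x i (m i))) (U : Filter ℕ) (𝓝 0)} with hKdef
  obtain ⟨p₀, hp₀⟩ := hlim (fun i => x i 0)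
  have hp₀K : p₀ ∈ K := ⟨fun _ => 0, hdistlim _ _ hp₀⟩
  -- forward invariance
  have hfwd : ∀ p ∈ K, ∃ lam : Λ, f lam p ∈ K := by
    rintro p ⟨m, hm⟩
    have hw : Tendsto (fun i => x i (m i)) (U : Filter ℕ) (𝓝 p) := by
      rw [tendsto_iff_dist_tendsto_zero]
      simpa [dist_comm] using hm
    obtain ⟨lam, hlam⟩ := hΛ (fun i => σs i (m i))
    refine ⟨lam, fun i => m i + 1, ?_⟩
    have hcont : Tendsto (fun i => dist (f lam p) (f lam (x i (m i))))
        (U : Filter ℕ) (𝓝 0) :=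
      hdistlim _ _ (((f lam).continuous.tendsto p).comp hw)
    have h1 : Tendsto (fun i => dist (f lam p) (f lam (x i (m i))) + 1 / ((i : ℝ) + 1))
        (U : Filter ℕ) (𝓝 0) := by
      simpa using hcont.add hδ0
    refine squeeze_zero' (Filter.Eventually.of_forall fun i => dist_nonneg) ?_ h1
    filter_upwards [hlam] with i hi
    have hi' : σs i (m i) = lam := hi
    have h2 := (hσs i (m i)).le
    rw [hi'] at h2
    calc dist (f lam p) (x i (m i + 1))
        ≤ dist (f lam p) (f lam (x i (m i))) + dist (f lam (x i (m i))) (x i (m i + 1)) :=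
          dist_triangle _ _ _
      _ ≤ dist (f lam p) (f lam (x i (m i))) + 1 / ((i : ℝ) + 1) := by
          rw [dist_comm (f lam (x i (m i)))]
          linarith
  -- backward invariance
  have hbwd : ∀ p ∈ K, ∃ (lam : Λ) (q : X), q ∈ K ∧ f lam q = p := by
    rintro p ⟨m, hm⟩
    obtain ⟨q, hq⟩ := hlim (fun i => x i (m i - 1))
    obtain ⟨lam, hlam⟩ := hΛ (fun i => σs i (m i - 1))
    have hqK : q ∈ K := ⟨fun i => m i - 1, hdistlim _ _ hq⟩
    refine ⟨lam, q, hqK, ?_⟩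
    have hcont : Tendsto (fun i => dist (f lam q) (f lam (x i (m i - 1))))
        (U : Filter ℕ) (𝓝 0) :=
      hdistlim _ _ (((f lam).continuous.tendsto q).comp
        (tendsto_iff_dist_tendsto_zero.mpr (by simpa [dist_comm] using hdistlim _ _ hq)))
    have hrhs : Tendsto (fun i => dist (f lam q) (f lam (x i (m i - 1))) + 1 / ((i : ℝ) + 1)
        + dist p (x i (m i))) (U : Filter ℕ) (𝓝 0) := by
      simpa using (hcont.add hδ0).add hm
    have hle : ∀ᶠ i in (U : Filter ℕ), dist (f lam q) p ≤
        dist (f lam q) (f lam (x i (m i - 1))) + 1 / ((i : ℝ) + 1) + dist p (x i (m i)) := by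
      filter_upwards [hlam] with i hi
      have hi' : σs i (m i - 1) = lam := hi
      have h2 := (hσs i (m i - 1)).le
      rw [hi'] at h2
      have h3 : m i - 1 + 1 = m i := by ring
      rw [h3] at h2
      have h4 := dist_triangle4 (f lam q) (f lam (x i (m i - 1))) (x i (m i)) p
      rw [dist_comm (x i (m i)) p] at h4
      rw [dist_comm (f lam (x i (m i - 1))) (x i (m i))] at h4
      linarith
    have hd0 : dist (f lam q) p ≤ 0 := ge_of_tendsto hrhs hle
    exact dist_le_zero.mp hd0
  -- get a full orbit inside K
  have hKne : K.Nonempty := ⟨p₀, hp₀K⟩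
  obtain ⟨z, hzorb, hzK⟩ := exists_orbitZ_in_set f K hKne hfwd hbwd
  -- a finite ε-net of K inside K
  have hTB : TotallyBounded K :=
    TotallyBounded.subset (Set.subset_univ K) isCompact_univ.totallyBounded
  obtain ⟨t, htK, htfin, htcover⟩ :=
    (totallyBounded_iff_subset.mp hTB) _ (dist_mem_uniformity hε)
  have hev : ∀ y ∈ t, ∃ mm : ℕ → ℤ,
      Tendsto (fun i => dist y (x i (mm i))) (U : Filter ℕ) (𝓝 0) := fun y hy => htK hy
  choose! mm hmm using hev
  have hevU : ∀ᶠ i in (U : Filter ℕ), ∀ y ∈ t, dist y (x i (mm y i)) < ε := by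
    rw [Filter.eventually_all_finite htfin]
    intro y hy
    exact (hmm y hy).eventually (gt_mem_nhds hε)
  obtain ⟨i0, hi0⟩ := hevU.exists
  obtain ⟨n, hn⟩ := hxbad i0 z hzorb
  have hzn : z n ∈ ⋃ y ∈ t, {w | (w, y) ∈ {p : X × X | dist p.1 p.2 < ε}} := htcover (hzK n)
  simp only [Set.mem_iUnion, Set.mem_setOf_eq] at hzn
  obtain ⟨y, hy, hyz⟩ := hzn
  have h1 : dist y (x i0 (mm y i0)) < ε := hi0 y hy
  have h2 := hn (mm y i0)
  have h3 : dist (z n) (x i0 (mm y i0)) ≤ dist (z n) y + dist y (x i0 (mm y i0)) :=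
    dist_triangle _ _ _
  linarith
end

section
/- Let X be a complete metric space. If a parameterized iterated function system F = {X; f_λ | λ ∈ Λ} of continuous maps is uniformly contracting, then F has the shadowing property on ℤ₊. -/
/-- A uniformly contracting IFS on a complete metric space has the shadowing property
on `ℤ₊`. -/
theorem shadowing_of_uniformlyContracting
    {X Λ : Type*} [MetricSpace X] [CompleteSpace X] [Finite Λ] [Nonempty Λ]
    (f : Λ → X → X) (hf : ∀ lam : Λ, Continuous (f lam))
    (hc : UniformlyContracting f) :
    ShadowingNat f := by
  obtain ⟨β, hβ1, hβf⟩ := hc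
  set β' : ℝ := max β 0 with hβ'
  have hβ'0 : 0 ≤ β' := le_max_right _ _
  have hβ'1 : β' < 1 := max_lt hβ1 one_pos
  intro ε hε
  refine ⟨ε * (1 - β'), mul_pos hε (by linarith), ?_⟩
  rintro x ⟨σ, hσ⟩
  let y : ℕ → X := fun n => Nat.rec (x 0) (fun n yn => f (σ n) yn) n
  have hy : ∀ n, y (n + 1) = f (σ n) (y n) := fun n => rfl
  refine ⟨y, ⟨σ, hy⟩, ?_⟩
  intro n
  induction n with
  | zero => show dist (x 0) (x 0) ≤ ε; rw [dist_self]; exact hε.le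
  | succ n ih =>
    have h1 : dist (x (n + 1)) (y (n + 1)) ≤
        dist (x (n + 1)) (f (σ n) (x n)) + dist (f (σ n) (x n)) (f (σ n) (y n)) := by
      rw [hy]; exact dist_triangle _ _ _
    have h2 : dist (f (σ n) (x n)) (f (σ n) (y n)) ≤ β' * dist (x n) (y n) :=
      (hβf (σ n) (x n) (y n)).trans
        (mul_le_mul_of_nonneg_right (le_max_left _ _) dist_nonneg)
    have h3 : β' * dist (x n) (y n) ≤ β' * ε :=
      mul_le_mul_of_nonneg_left ih hβ'0
    have h4 := (hσ n).le
    calc dist (x (n + 1)) (y (n + 1)) ≤ _ := h1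
      _ ≤ ε * (1 - β') + β' * ε := by linarith
      _ = ε := by ring
end

section
/- Let X be a complete metric space. If a parameterized iterated function system F = {X; f_λ | λ ∈ Λ} of continuous maps is uniformly expanding and each map f_λ (λ ∈ Λ) is surjective, then F has the shadowing property on ℤ₊. -/
/-- A uniformly expanding IFS with surjective maps on a complete metric space has the
shadowing property on `ℤ₊`. -/
theorem shadowing_of_uniformlyExpanding
    {X Λ : Type*} [MetricSpace X] [CompleteSpace X] [Finite Λ] [Nonempty Λ]
    (f : Λ → X → X) (hf : ∀ lam : Λ, Continuous (f lam))
    (hc : UniformlyExpanding f) (hsurj : ∀ lam : Λ, Function.Surjective (f lam)) :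
    ShadowingNat f := by
  obtain ⟨α, hα, hexp⟩ := hc
  have hα0 : (0:ℝ) < α := lt_trans one_pos hα
  set g : Λ → X → X := fun lam => Function.surjInv (hsurj lam) with hgdef
  have hfg : ∀ lam y, f lam (g lam y) = y := fun lam y => Function.surjInv_eq (hsurj lam) y
  have hgd : ∀ lam a b, dist (g lam a) (g lam b) ≤ α⁻¹ * dist a b := by
    intro lam a b
    have h := hexp lam (g lam a) (g lam b)
    rw [hfg, hfg] at h
    calc dist (g lam a) (g lam b) = α⁻¹ * (α * dist (g lam a) (g lam b)) := by
          field_simp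
      _ ≤ α⁻¹ * dist a b := mul_le_mul_of_nonneg_left h (by positivity)
  have hgcont : ∀ lam, Continuous (g lam) := by
    intro lam
    refine (LipschitzWith.of_dist_le_mul (K := ⟨α⁻¹, by positivity⟩) ?_).continuous
    intro a b; exact hgd lam a b
  intro ε hε
  have hC : (0:ℝ) < ε * (α - 1) := by nlinarith
  refine ⟨ε * (α - 1), hC, ?_⟩
  rintro x ⟨σ, hσ⟩
  set C : ℝ := ε * (α - 1) / α with hCdef
  set Z : ℕ → ℕ → X := fun k => Nat.rec x (fun _ w n => g (σ n) (w (n+1))) k with hZdef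
  have hZ0 : ∀ n, Z 0 n = x n := fun n => rfl
  have hZs : ∀ k n, Z (k+1) n = g (σ n) (Z k (n+1)) := fun k n => rfl
  have hr1 : α⁻¹ < 1 := inv_lt_one_of_one_lt₀ hα
  have key : ∀ k n, dist (Z k n) (Z (k+1) n) ≤ C * α⁻¹ ^ k := by
    intro k
    induction k with
    | zero =>
      intro n
      have h1 := hσ n
      have h2 := hexp (σ n) (x n) (g (σ n) (x (n+1)))
      rw [hfg] at h2
      have : α * dist (x n) (g (σ n) (x (n+1))) ≤ ε * (α - 1) := by
        calc α * dist (x n) (g (σ n) (x (n+1))) ≤ dist (f (σ n) (x n)) (x (n+1)) := h2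
          _ = dist (x (n+1)) (f (σ n) (x n)) := dist_comm _ _
          _ ≤ ε * (α - 1) := le_of_lt h1
      have := (le_div_iff₀ hα0).2 (by linarith [this] : dist (x n) (g (σ n) (x (n+1))) * α ≤ ε * (α-1))
      simpa [hZ0, hZs, hCdef, mul_comm] using this
    | succ k ih =>
      intro n
      calc dist (Z (k+1) n) (Z (k+2) n)
          = dist (g (σ n) (Z k (n+1))) (g (σ n) (Z (k+1) (n+1))) := rfl
        _ ≤ α⁻¹ * dist (Z k (n+1)) (Z (k+1) (n+1)) := hgd _ _ _
        _ ≤ α⁻¹ * (C * α⁻¹ ^ k) := by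
            have := ih (n+1)
            have hαi : (0:ℝ) ≤ α⁻¹ := by positivity
            nlinarith
        _ = C * α⁻¹ ^ (k+1) := by ring
  have hcau : ∀ n, CauchySeq (fun k => Z k n) :=
    fun n => cauchySeq_of_le_geometric α⁻¹ C hr1 (fun k => key k n)
  choose y hy using fun n => cauchySeq_tendsto_of_complete (hcau n)
  refine ⟨y, ⟨σ, ?_⟩, ?_⟩
  · intro n
    have h1 : Filter.Tendsto (fun k => Z (k+1) n) Filter.atTop (nhds (y n)) :=
      (hy n).comp (Filter.tendsto_add_atTop_nat 1)
    have h2 : Filter.Tendsto (fun k => g (σ n) (Z k (n+1))) Filter.atTop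
        (nhds (g (σ n) (y (n+1)))) := ((hgcont (σ n)).tendsto _).comp (hy (n+1))
    have heq : y n = g (σ n) (y (n+1)) := tendsto_nhds_unique h1 h2
    rw [heq, hfg]
  · intro n
    have hd := dist_le_of_le_geometric_of_tendsto₀ α⁻¹ C hr1 (fun k => key k n) (hy n)
    have hne : α ≠ 0 := ne_of_gt hα0
    have h2 : α - 1 ≠ 0 := sub_ne_zero.2 (ne_of_gt hα)
    have : C / (1 - α⁻¹) = ε := by
      rw [hCdef]; field_simp
    rw [hZ0] at hd
    linarith [hd, this.le, this.ge]
end
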